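/- arXiv:2001.10820 — 6 statements merged into one kernel-verified Lean document; each statement's English description precedes it below -/
import Mathlib

section
/- Consider the quadratic two-player game where player 1 minimizes over x ∈ ℝ^m the function xᵀa + xᵀB y + (1/(2η)) xᵀx (for fixed y) and player 2 minimizes over y ∈ ℝ^n the function yᵀc + yᵀBᵀ(−x) + (1/(2η)) yᵀy (for fixed x), with η > 0 and Id + η²BBᵀ invertible. Then the pair (x*, y*) with x* = −η(Id + η²BBᵀ)⁻¹(a − ηBc) and y* = −η(Id + η²BᵀB)⁻¹(c + ηBᵀa) is the unique pair of strategies such that x* is the minimizer of player 1's cost given y* and y* is the minimizer of player 2's cost given x*. -/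
/-!
Completing the square, each player's cost is strictly convex in its own strategy, with unique
best response `-η` times its linear coefficient. A Nash equilibrium is therefore exactly a solution
of the linear system `x = -η (a + B y)`, `y = -η (c - Bᵀ x)`. Eliminating `y` gives
`(1 + η² B Bᵀ) x = -η (a - η B c)` and eliminating `x` gives `(1 + η² Bᵀ B) y = -η (c + η Bᵀ a)`;
both matrices are invertible, the second by Sylvester's identity `det (1 + B Bᵀ t) = det (1 + Bᵀ B t)`.
-/

open Matrix

section CompletingTheSquare

variable {ι : Type*} [Fintype ι]

lemma dotProduct_add_one_div_mul_self_eq {η : ℝ} (hη : η ≠ 0) (d x : ι → ℝ) :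
    x ⬝ᵥ d + 1 / (2 * η) * (x ⬝ᵥ x)
      = 1 / (2 * η) * ((x + η • d) ⬝ᵥ (x + η • d)) - η / 2 * (d ⬝ᵥ d) := by
  simp only [dotProduct_add, add_dotProduct, smul_dotProduct, dotProduct_smul,
    dotProduct_comm d x, smul_eq_mul]
  field_simp
  ring

theorem forall_dotProduct_add_one_div_mul_self_le_iff {η : ℝ} (hη : 0 < η) (d x' : ι → ℝ) :
    (∀ x : ι → ℝ, x' ⬝ᵥ d + 1 / (2 * η) * (x' ⬝ᵥ x') ≤ x ⬝ᵥ d + 1 / (2 * η) * (x ⬝ᵥ x)) ↔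
      x' = -η • d := by
  have hc : 0 < 1 / (2 * η) := by positivity
  simp only [dotProduct_add_one_div_mul_self_eq hη.ne', sub_le_sub_iff_right,
    mul_le_mul_iff_right₀ hc]
  constructor
  · intro h
    have hmin := h (-η • d)
    rw [neg_smul, neg_add_cancel, zero_dotProduct] at hmin
    rw [neg_smul, eq_neg_iff_add_eq_zero]
    exact dotProduct_self_eq_zero.mp (le_antisymm hmin (dotProduct_self_star_nonneg _))
  · rintro rfl x
    rw [neg_smul, neg_add_cancel, zero_dotProduct]
    exact dotProduct_self_star_nonneg _

end CompletingTheSquare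

namespace Matrix

variable {R : Type*} [CommRing R] {m n : Type*} [Fintype m] [Fintype n] [DecidableEq m]
  [DecidableEq n]

lemma eq_inv_mulVec_iff {A : Matrix m m R} (hA : IsUnit A) (x v : m → R) :
    x = A⁻¹ *ᵥ v ↔ A *ᵥ x = v := by
  have hcancel : A *ᵥ (A⁻¹ *ᵥ v) = v := by
    rw [mulVec_mulVec, mul_nonsing_inv A ((isUnit_iff_isUnit_det A).mp hA), one_mulVec]
  rw [← hcancel, (mulVec_injective_of_isUnit hA).eq_iff, hcancel]

lemma isUnit_one_add_smul_transpose_mul (B : Matrix m n R) (t : R)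
    (h : IsUnit (1 + t • (B * Bᵀ))) : IsUnit (1 + t • (Bᵀ * B)) := by
  rw [isUnit_iff_isUnit_det] at *
  rwa [← Matrix.mul_smul, det_one_add_mul_comm, Matrix.smul_mul]

end Matrix

section BilinearGame

variable {R : Type*} [CommRing R] {m n : Type*} [Fintype m] [Fintype n]
  (B : Matrix m n R) (a : m → R) (c : n → R) (η : R) {x : m → R} {y : n → R}

lemma best_responses_iff [DecidableEq m] :
    (x = -η • (a + B *ᵥ y) ∧ y = -η • (c - Bᵀ *ᵥ x)) ↔
      ((1 + η ^ 2 • (B * Bᵀ)) *ᵥ x = -η • (a - η • B *ᵥ c) ∧ y = -η • (c - Bᵀ *ᵥ x)) := by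
  have hM : (1 + η ^ 2 • (B * Bᵀ)) *ᵥ x = x + η ^ 2 • B *ᵥ (Bᵀ *ᵥ x) := by
    rw [add_mulVec, one_mulVec, smul_mulVec, ← mulVec_mulVec]
  refine and_congr_left fun hy => ?_
  subst hy
  simp only [hM, mulVec_smul, mulVec_sub, smul_sub, smul_smul, smul_add]
  constructor <;> intro h <;> linear_combination (norm := module) h

lemma one_add_smul_transpose_mul_mulVec_of_best_responses [DecidableEq n]
    (hx : x = -η • (a + B *ᵥ y)) (hy : y = -η • (c - Bᵀ *ᵥ x)) :
    (1 + η ^ 2 • (Bᵀ * B)) *ᵥ y = -η • (c + η • Bᵀ *ᵥ a) := by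
  rw [add_mulVec, one_mulVec, smul_mulVec, ← mulVec_mulVec]
  nth_rewrite 1 [hy]
  rw [hx]
  simp only [mulVec_smul, mulVec_add, smul_sub, smul_smul, smul_add]
  module

variable [DecidableEq m] [DecidableEq n]

theorem best_responses_iff_eq (hM : IsUnit (1 + η ^ 2 • (B * Bᵀ))) :
    (x = -η • (a + B *ᵥ y) ∧ y = -η • (c - Bᵀ *ᵥ x)) ↔
      (x = -η • ((1 + η ^ 2 • (B * Bᵀ))⁻¹ *ᵥ (a - η • B *ᵥ c)) ∧
        y = -η • ((1 + η ^ 2 • (Bᵀ * B))⁻¹ *ᵥ (c + η • Bᵀ *ᵥ a))) := by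
  have hN := isUnit_one_add_smul_transpose_mul B _ hM
  rw [← mulVec_smul _ (-η), ← mulVec_smul _ (-η), eq_inv_mulVec_iff hM, eq_inv_mulVec_iff hN]
  constructor
  · intro h
    exact ⟨((best_responses_iff B a c η).1 h).1,
      one_add_smul_transpose_mul_mulVec_of_best_responses B a c η h.1 h.2⟩
  · rintro ⟨hx, hy⟩
    -- `x` together with player 2's best response to it solves the system; this pins down `y`.
    have h₀ := (best_responses_iff B a c η (y := -η • (c - Bᵀ *ᵥ x))).2 ⟨hx, rfl⟩
    have hy₀ := one_add_smul_transpose_mul_mulVec_of_best_responses B a c η h₀.1 h₀.2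
    obtain rfl := mulVec_injective_of_isUnit hN (hy.trans hy₀.symm)
    exact h₀

end BilinearGame

/-- zero-sum quadratic-regularized bilinear game, closed-form unique Nash
equilibrium (CGD update). -/
theorem stmt_3 (m n : ℕ) (a : Fin m → ℝ) (c : Fin n → ℝ)
    (B : Matrix (Fin m) (Fin n) ℝ) (η : ℝ) (hη : 0 < η)
    (hinv : IsUnit ((1 : Matrix (Fin m) (Fin m) ℝ) + η ^ 2 • (B * Bᵀ))) :
    let P1 : (Fin m → ℝ) → (Fin n → ℝ) → ℝ := fun x y =>
      x ⬝ᵥ a + x ⬝ᵥ B.mulVec y + (1 / (2 * η)) * (x ⬝ᵥ x)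
    let P2 : (Fin n → ℝ) → (Fin m → ℝ) → ℝ := fun y x =>
      y ⬝ᵥ c + y ⬝ᵥ Bᵀ.mulVec (-x) + (1 / (2 * η)) * (y ⬝ᵥ y)
    let xstar : Fin m → ℝ :=
      -η • ((1 + η ^ 2 • (B * Bᵀ))⁻¹.mulVec (a - η • B.mulVec c))
    let ystar : Fin n → ℝ :=
      -η • ((1 + η ^ 2 • (Bᵀ * B))⁻¹.mulVec (c + η • Bᵀ.mulVec a))
    ∀ x' : Fin m → ℝ, ∀ y' : Fin n → ℝ,
      ((∀ x, P1 x' y' ≤ P1 x y') ∧ (∀ y, P2 y' x' ≤ P2 y x')) ↔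
        (x' = xstar ∧ y' = ystar) := by
  intro P1 P2 xstar ystar x' y'
  have hP1 (x y) : P1 x y = x ⬝ᵥ (a + B *ᵥ y) + 1 / (2 * η) * (x ⬝ᵥ x) := by
    simp only [P1, dotProduct_add]
  have hP2 (y x) : P2 y x = y ⬝ᵥ (c - Bᵀ *ᵥ x) + 1 / (2 * η) * (y ⬝ᵥ y) := by
    simp only [P2, mulVec_neg, dotProduct_neg, sub_eq_add_neg, dotProduct_add]
  simp only [hP1, hP2, forall_dotProduct_add_one_div_mul_self_le_iff hη]
  exact best_responses_iff_eq B a c η hinv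
end

section
/- For the bilinear game f(x,y) = α x y (x, y ∈ ℝ, α ≠ 0), the CGD update is x_{k+1} = x_k − η(1+η²α²)⁻¹(α y_k + ηα² x_k) and y_{k+1} = y_k + η(1+η²α²)⁻¹(α x_k − ηα² y_k), and it satisfies x_{k+1}² + y_{k+1}² = (x_k² + y_k²)/(1 + η²α²). Hence CGD converges to the Nash equilibrium (0,0) at an exponential (linear) rate for every η > 0. -/
open Filter

/-- CGD on the bilinear game `f(x,y) = αxy` contracts the squared norm by
`1/(1+η²α²)` each step, hence converges to the Nash equilibrium `(0,0)`. -/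
theorem stmt_7 (α η : ℝ) (hα : α ≠ 0) (hη : 0 < η) (x y : ℕ → ℝ)
    (hx : ∀ k, x (k + 1) = x k - η * (1 + η ^ 2 * α ^ 2)⁻¹ * (α * y k + η * α ^ 2 * x k))
    (hy : ∀ k, y (k + 1) = y k + η * (1 + η ^ 2 * α ^ 2)⁻¹ * (α * x k - η * α ^ 2 * y k)) :
    (∀ k, x (k + 1) ^ 2 + y (k + 1) ^ 2 =
        (x k ^ 2 + y k ^ 2) / (1 + η ^ 2 * α ^ 2)) ∧
    (∀ k, x k ^ 2 + y k ^ 2 = (x 0 ^ 2 + y 0 ^ 2) / (1 + η ^ 2 * α ^ 2) ^ k) ∧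
    Tendsto (fun k => (x k, y k)) atTop (nhds (0, 0)) := by
  have hpos : (0:ℝ) < 1 + η ^ 2 * α ^ 2 := by positivity
  have hne : (1 + η ^ 2 * α ^ 2) ≠ 0 := ne_of_gt hpos
  have hstep : ∀ k, x (k + 1) ^ 2 + y (k + 1) ^ 2 =
      (x k ^ 2 + y k ^ 2) / (1 + η ^ 2 * α ^ 2) := by
    intro k
    rw [hx k, hy k]
    field_simp
    ring
  have hgeo : ∀ k, x k ^ 2 + y k ^ 2 = (x 0 ^ 2 + y 0 ^ 2) / (1 + η ^ 2 * α ^ 2) ^ k := by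
    intro k
    induction k with
    | zero => simp
    | succ n ih =>
      rw [hstep n, ih, div_div, ← pow_succ]
  refine ⟨hstep, hgeo, ?_⟩
  have hr : |(1 + η ^ 2 * α ^ 2)⁻¹| < 1 := by
    rw [abs_of_pos (by positivity)]
    rw [inv_lt_one_iff₀]
    right
    have hpa : 0 < η ^ 2 * α ^ 2 := by positivity
    linarith
  have htend : Tendsto (fun k => x k ^ 2 + y k ^ 2) atTop (nhds 0) := by
    have : Tendsto (fun k => (x 0 ^ 2 + y 0 ^ 2) * ((1 + η ^ 2 * α ^ 2)⁻¹) ^ k) atTop (nhds 0) := by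
      have := tendsto_pow_atTop_nhds_zero_of_abs_lt_one hr
      simpa using this.const_mul (x 0 ^ 2 + y 0 ^ 2)
    refine this.congr fun k => ?_
    rw [hgeo k, div_eq_mul_inv, inv_pow]
  have hx0 : Tendsto x atTop (nhds 0) := by
    have hsq : Tendsto (fun k => x k ^ 2) atTop (nhds 0) := by
      refine squeeze_zero (fun k => sq_nonneg _) (fun k => ?_) htend
      nlinarith [sq_nonneg (y k)]
    have := hsq.sqrt
    simp only [Real.sqrt_sq_eq_abs, Real.sqrt_zero] at this
    exact (tendsto_zero_iff_abs_tendsto_zero x).mpr (by simpa [Function.comp_def] using this)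
  have hy0 : Tendsto y atTop (nhds 0) := by
    have hsq : Tendsto (fun k => y k ^ 2) atTop (nhds 0) := by
      refine squeeze_zero (fun k => sq_nonneg _) (fun k => ?_) htend
      nlinarith [sq_nonneg (x k)]
    have := hsq.sqrt
    simp only [Real.sqrt_sq_eq_abs, Real.sqrt_zero] at this
    exact (tendsto_zero_iff_abs_tendsto_zero y).mpr (by simpa [Function.comp_def] using this)
  exact hx0.prodMk_nhds hy0
end

section
/- For the bilinear game f(x,y) = α x y, the CGD iteration map is a contraction of the Euclidean norm with factor (1+η²α²)^{−1/2} < 1, and this factor is strictly decreasing in η. Hence increasing the step size strictly improves the per-iteration convergence rate of CGD on bilinear games. -/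
/-!
With `c = 1 + η²α²`, one CGD step on `αxy` simplifies to `(x, y) ↦ c⁻¹ (x - ηαy, y + ηαx)`:
the matrix `[[1, -ηα], [ηα, 1]]` scales Euclidean lengths by `√c`, so the step scales them
by `c⁻¹ √c = c^(-1/2)`. The factor is below `1` and decreasing in `η > 0` because
`t ↦ t^(-1/2)` is strictly antitone and `c > 1` increases with `η`.
-/

lemma cgd_bilinear_step_sq_add_sq (α η x y : ℝ) :
    (x - η * (1 + η ^ 2 * α ^ 2)⁻¹ * (α * y + η * α ^ 2 * x)) ^ 2 +
        (y + η * (1 + η ^ 2 * α ^ 2)⁻¹ * (α * x - η * α ^ 2 * y)) ^ 2 =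
      (1 + η ^ 2 * α ^ 2)⁻¹ * (x ^ 2 + y ^ 2) := by
  have hc : 1 + η ^ 2 * α ^ 2 ≠ 0 := by positivity
  have hx : x - η * (1 + η ^ 2 * α ^ 2)⁻¹ * (α * y + η * α ^ 2 * x) =
      (1 + η ^ 2 * α ^ 2)⁻¹ * (x - η * α * y) := by
    field_simp
    ring
  have hy : y + η * (1 + η ^ 2 * α ^ 2)⁻¹ * (α * x - η * α ^ 2 * y) =
      (1 + η ^ 2 * α ^ 2)⁻¹ * (y + η * α * x) := by
    field_simp
    ring
  rw [hx, hy]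
  field_simp
  ring

lemma Real.sqrt_inv_mul_eq_rpow {c : ℝ} (hc : 0 ≤ c) (s : ℝ) :
    √(c⁻¹ * s) = c ^ (-(1 / 2 : ℝ)) * √s := by
  rw [Real.sqrt_mul (inv_nonneg.mpr hc), Real.sqrt_inv, Real.rpow_neg hc, Real.sqrt_eq_rpow]

lemma one_lt_one_add_sq_mul_sq {α η : ℝ} (hα : α ≠ 0) (hη : η ≠ 0) :
    1 < 1 + η ^ 2 * α ^ 2 :=
  lt_add_of_pos_right 1 (by positivity)

lemma one_add_sq_mul_sq_lt_of_lt {α η₁ η₂ : ℝ} (hα : α ≠ 0) (h₁ : 0 ≤ η₁) (h₁₂ : η₁ < η₂) :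
    1 + η₁ ^ 2 * α ^ 2 < 1 + η₂ ^ 2 * α ^ 2 := by
  gcongr

/-- the CGD map on the bilinear game `f(x,y) = αxy` is a contraction of the
Euclidean norm with factor `(1+η²α²)^(-1/2) < 1`, strictly decreasing in `η`. -/
theorem stmt_8 (α : ℝ) (hα : α ≠ 0) :
    (∀ η : ℝ, 0 < η → ∀ x y : ℝ,
      Real.sqrt ((x - η * (1 + η ^ 2 * α ^ 2)⁻¹ * (α * y + η * α ^ 2 * x)) ^ 2 +
          (y + η * (1 + η ^ 2 * α ^ 2)⁻¹ * (α * x - η * α ^ 2 * y)) ^ 2) =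
        (1 + η ^ 2 * α ^ 2) ^ (-(1 / 2 : ℝ)) * Real.sqrt (x ^ 2 + y ^ 2)) ∧
    (∀ η : ℝ, 0 < η → (1 + η ^ 2 * α ^ 2) ^ (-(1 / 2 : ℝ)) < 1) ∧
    (∀ η₁ η₂ : ℝ, 0 < η₁ → η₁ < η₂ →
      (1 + η₂ ^ 2 * α ^ 2) ^ (-(1 / 2 : ℝ)) < (1 + η₁ ^ 2 * α ^ 2) ^ (-(1 / 2 : ℝ))) := by
  refine ⟨fun η _ x y => ?_, fun η hη => ?_, fun η₁ η₂ h₁ h₁₂ => ?_⟩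
  · rw [cgd_bilinear_step_sq_add_sq, Real.sqrt_inv_mul_eq_rpow (by positivity)]
  · exact Real.rpow_lt_one_of_one_lt_of_neg (one_lt_one_add_sq_mul_sq hα hη.ne') (by norm_num)
  · exact Real.rpow_lt_rpow_of_neg (by positivity)
      (one_add_sq_mul_sq_lt_of_lt hα h₁.le h₁₂) (by norm_num)
end

section
/- For the bilinear game f(x,y) = αxy, the linearized CGD (LCGD) update x_{k+1} = x_k − η(αy_k + ηα²x_k), y_{k+1} = y_k + η(αx_k − ηα²y_k) satisfies x_{k+1}² + y_{k+1}² = ((1−η²α²)² + η²α²)(x_k² + y_k²). In particular LCGD converges to (0,0) for all nonzero starting points if and only if η²α² < 1. -/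
open Filter Topology

/-! Each LCGD step is the linear map with matrix `[[1 - t, -ηα], [ηα, 1 - t]]`, `t = η²α²`: a rotation
composed with the scaling by `√((1 - t)² + t)`. Hence `x² + y²` is multiplied by `r = (1 - t)² + t`
at every step and equals `rᵏ (x₀² + y₀²)`. A nonzero trajectory therefore tends to `0` iff `r < 1`,
and `r = 1 - t(1 - t) < 1` iff `t < 1` because `t > 0`. -/

lemma eq_pow_mul_of_succ_eq_mul {M : Type*} [Monoid M] {u : ℕ → M} {r : M}
    (h : ∀ k, u (k + 1) = r * u k) (k : ℕ) : u k = r ^ k * u 0 := by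
  induction k with
  | zero => rw [pow_zero, one_mul]
  | succ k ih => rw [h, ih, pow_succ', mul_assoc]

lemma tendsto_pow_mul_const_nhds_zero_iff {𝕜 : Type*}
    [Field 𝕜] [LinearOrder 𝕜] [IsStrictOrderedRing 𝕜] [Archimedean 𝕜]
    [TopologicalSpace 𝕜] [OrderTopology 𝕜] {r c : 𝕜} (hc : c ≠ 0) :
    Tendsto (fun n : ℕ ↦ r ^ n * c) atTop (𝓝 0) ↔ |r| < 1 := by
  rw [← tendsto_pow_atTop_nhds_zero_iff]
  refine ⟨fun h ↦ ?_, fun h ↦ by simpa using h.mul_const c⟩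
  simpa [mul_assoc, hc] using h.mul_const c⁻¹

lemma tendsto_prodMk_nhds_zero_iff_sq_add_sq {ι : Type*} {l : Filter ι} {x y : ι → ℝ} :
    Tendsto (fun i ↦ (x i, y i)) l (𝓝 (0, 0)) ↔ Tendsto (fun i ↦ x i ^ 2 + y i ^ 2) l (𝓝 0) := by
  refine ⟨fun h ↦ ?_, fun h ↦ ?_⟩
  · have hcont : Continuous fun p : ℝ × ℝ ↦ p.1 ^ 2 + p.2 ^ 2 := by fun_prop
    simpa [Function.comp_def] using (hcont.tendsto (0, 0)).comp h
  · have hsqrt : Tendsto (fun i ↦ √(x i ^ 2 + y i ^ 2)) l (𝓝 0) := by simpa using h.sqrt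
    exact .prodMk_nhds
      (squeeze_zero_norm (fun i ↦ Real.abs_le_sqrt (le_add_of_nonneg_right (sq_nonneg _))) hsqrt)
      (squeeze_zero_norm (fun i ↦ Real.abs_le_sqrt (le_add_of_nonneg_left (sq_nonneg _))) hsqrt)

lemma sq_sub_add_lt_one_iff {t : ℝ} (ht : 0 < t) : (1 - t) ^ 2 + t < 1 ↔ t < 1 := by
  constructor <;> intro h <;> nlinarith

def lcgdStep (α η : ℝ) (p : ℝ × ℝ) : ℝ × ℝ :=
  (p.1 - η * (α * p.2 + η * α ^ 2 * p.1), p.2 + η * (α * p.1 - η * α ^ 2 * p.2))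

lemma exists_lcgd_trajectory (α η : ℝ) (p₀ : ℝ × ℝ) :
    ∃ x y : ℕ → ℝ, (x 0, y 0) = p₀ ∧
      (∀ k, x (k + 1) = x k - η * (α * y k + η * α ^ 2 * x k)) ∧
      (∀ k, y (k + 1) = y k + η * (α * x k - η * α ^ 2 * y k)) :=
  ⟨fun k ↦ ((lcgdStep α η)^[k] p₀).1, fun k ↦ ((lcgdStep α η)^[k] p₀).2, rfl,
    fun _ ↦ congrArg Prod.fst (Function.iterate_succ_apply' _ _ _),
    fun _ ↦ congrArg Prod.snd (Function.iterate_succ_apply' _ _ _)⟩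

section Trajectory

variable {α η : ℝ} {x y : ℕ → ℝ}
  (hx : ∀ k, x (k + 1) = x k - η * (α * y k + η * α ^ 2 * x k))
  (hy : ∀ k, y (k + 1) = y k + η * (α * x k - η * α ^ 2 * y k))
include hx hy

lemma lcgd_sq_add_sq_succ (k : ℕ) :
    x (k + 1) ^ 2 + y (k + 1) ^ 2 =
      ((1 - η ^ 2 * α ^ 2) ^ 2 + η ^ 2 * α ^ 2) * (x k ^ 2 + y k ^ 2) := by
  rw [hx, hy]; ring

lemma lcgd_tendsto_zero_iff (h₀ : (x 0, y 0) ≠ (0, 0)) :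
    Tendsto (fun k ↦ (x k, y k)) atTop (𝓝 (0, 0)) ↔
      (1 - η ^ 2 * α ^ 2) ^ 2 + η ^ 2 * α ^ 2 < 1 := by
  have hc : x 0 ^ 2 + y 0 ^ 2 ≠ 0 := by
    contrapose! h₀
    rw [Prod.mk.injEq]
    constructor <;> nlinarith [sq_nonneg (x 0), sq_nonneg (y 0)]
  rw [tendsto_prodMk_nhds_zero_iff_sq_add_sq,
    funext (eq_pow_mul_of_succ_eq_mul (u := fun k ↦ x k ^ 2 + y k ^ 2) (lcgd_sq_add_sq_succ hx hy))]
  exact (tendsto_pow_mul_const_nhds_zero_iff hc).trans (by rw [abs_of_nonneg (by positivity)])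

end Trajectory

/-- LCGD on the bilinear game `f(x,y) = αxy`: norm evolution and exact
convergence criterion `η²α² < 1`. -/
theorem stmt_9 (α η : ℝ) (hα : α ≠ 0) (hη : 0 < η) :
    (∀ x y : ℕ → ℝ,
      (∀ k, x (k + 1) = x k - η * (α * y k + η * α ^ 2 * x k)) →
      (∀ k, y (k + 1) = y k + η * (α * x k - η * α ^ 2 * y k)) →
      ∀ k, x (k + 1) ^ 2 + y (k + 1) ^ 2 =
        ((1 - η ^ 2 * α ^ 2) ^ 2 + η ^ 2 * α ^ 2) * (x k ^ 2 + y k ^ 2)) ∧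
    ((∀ x y : ℕ → ℝ,
        (∀ k, x (k + 1) = x k - η * (α * y k + η * α ^ 2 * x k)) →
        (∀ k, y (k + 1) = y k + η * (α * x k - η * α ^ 2 * y k)) →
        (x 0, y 0) ≠ (0, 0) →
        Tendsto (fun k => (x k, y k)) atTop (nhds (0, 0))) ↔
      η ^ 2 * α ^ 2 < 1) := by
  rw [← sq_sub_add_lt_one_iff (by positivity)]
  refine ⟨fun x y hx hy ↦ lcgd_sq_add_sq_succ hx hy, fun h ↦ ?_,
    fun h x y hx hy h₀ ↦ (lcgd_tendsto_zero_iff hx hy h₀).2 h⟩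
  obtain ⟨x, y, h₀, hx, hy⟩ := exists_lcgd_trajectory α η (1, 0)
  have h₀' : (x 0, y 0) ≠ (0, 0) := by simp [h₀]
  exact (lcgd_tendsto_zero_iff hx hy h₀').1 (h x y hx hy h₀')
end

section
/- For the convex-concave game f(x,y) = α(x²−y²), g = −f, with α, η > 0, consensus optimization (ConOpt) with parameter γ > 0 gives updates x_{k+1} = (1 − 2ηα − 4ηγα²)x_k, y_{k+1} = (1 − 2ηα − 4ηγα²)y_k, while for the concave-convex game f(x,y) = α(−x²+y²) it gives x_{k+1} = (1 + 2ηα − 4ηγα²)x_k, y_{k+1} = (1 + 2ηα − 4ηγα²)y_k. Consequently, if 4γα² > 2α (i.e. γα > 1/2) and η is small enough, ConOpt converges to the spurious critical point (0,0) of the concave-convex game, which is not a Nash equilibrium. -/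
open Filter

theorem tendsto_nhds_zero_of_succ_eq_mul {c : ℝ} (hc : |c| < 1) {x : ℕ → ℝ}
    (hx : ∀ k, x (k + 1) = c * x k) : Tendsto x atTop (nhds 0) := by
  have closed_form : ∀ k, x k = c ^ k * x 0 := by
    intro k
    induction k with
    | zero => simp
    | succ k ih => rw [hx k, ih, pow_succ]; ring
  simpa [← closed_form] using (tendsto_pow_atTop_nhds_zero_of_abs_lt_one hc).mul_const (x 0)

theorem abs_one_sub_mul_lt_one {η d : ℝ} (hη : 0 < η) (hd : 0 < d) (hηd : η < 2 / d) :
    |1 - η * d| < 1 := by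
  have hηd' : η * d < 2 := (lt_div_iff₀ hd).mp hηd
  rw [abs_lt]
  constructor <;> nlinarith [mul_pos hη hd]

theorem stmt_11_general (α γ : ℝ) (hα : 0 < α) :
    (∀ η x : ℝ, x - η * (2 * α * x + γ * (2 * α) * (2 * α * x)) =
        (1 - 2 * η * α - 4 * η * γ * α ^ 2) * x) ∧
    (∀ η x : ℝ, x - η * (-(2 * α * x) + γ * (-(2 * α)) * (-(2 * α * x))) =
        (1 + 2 * η * α - 4 * η * γ * α ^ 2) * x) ∧
    (1 / 2 < γ * α →
      ∃ η₀ > 0, ∀ η : ℝ, 0 < η → η < η₀ →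
        ∀ x y : ℕ → ℝ,
          (∀ k, x (k + 1) = (1 + 2 * η * α - 4 * η * γ * α ^ 2) * x k) →
          (∀ k, y (k + 1) = (1 + 2 * η * α - 4 * η * γ * α ^ 2) * y k) →
          Tendsto (fun k => (x k, y k)) atTop (nhds (0, 0))) ∧
    (∀ x : ℝ, x ≠ 0 → α * (-x ^ 2 + (0 : ℝ) ^ 2) < α * (-(0 : ℝ) ^ 2 + (0 : ℝ) ^ 2)) := by
  refine ⟨fun η x => by ring, fun η x => by ring, fun hγα => ?_, fun x hx => ?_⟩
  · -- the ConOpt factor is `1 - η d`, and `d > 0` exactly when `γα > 1/2`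
    have hd : 0 < 4 * γ * α ^ 2 - 2 * α := by nlinarith
    refine ⟨2 / (4 * γ * α ^ 2 - 2 * α), by positivity, fun η hη hηd x y hx hy => ?_⟩
    have hc : |1 + 2 * η * α - 4 * η * γ * α ^ 2| < 1 := by
      convert abs_one_sub_mul_lt_one hη hd hηd using 2
      ring
    exact (tendsto_nhds_zero_of_succ_eq_mul hc hx).prodMk_nhds
      (tendsto_nhds_zero_of_succ_eq_mul hc hy)
  · have hx2 : 0 < x ^ 2 := by positivity
    nlinarith

/-- ConOpt updates on the convex-concave game `f = α(x²-y²)` and the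
concave-convex game `f = α(-x²+y²)` (with `g = -f`), and convergence of ConOpt to the
spurious critical point `(0,0)` of the concave-convex game when `γα > 1/2` and `η` is
small enough; `(0,0)` is not a Nash equilibrium of that game. -/
theorem stmt_11 (α γ : ℝ) (hα : 0 < α) (hγ : 0 < γ) :
    (∀ η x : ℝ, x - η * (2 * α * x + γ * (2 * α) * (2 * α * x)) =
        (1 - 2 * η * α - 4 * η * γ * α ^ 2) * x) ∧
    (∀ η x : ℝ, x - η * (-(2 * α * x) + γ * (-(2 * α)) * (-(2 * α * x))) =
        (1 + 2 * η * α - 4 * η * γ * α ^ 2) * x) ∧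
    (1 / 2 < γ * α →
      ∃ η₀ > 0, ∀ η : ℝ, 0 < η → η < η₀ →
        ∀ x y : ℕ → ℝ,
          (∀ k, x (k + 1) = (1 + 2 * η * α - 4 * η * γ * α ^ 2) * x k) →
          (∀ k, y (k + 1) = (1 + 2 * η * α - 4 * η * γ * α ^ 2) * y k) →
          Tendsto (fun k => (x k, y k)) atTop (nhds (0, 0))) ∧
    (∀ x : ℝ, x ≠ 0 → α * (-x ^ 2 + (0 : ℝ) ^ 2) < α * (-(0 : ℝ) ^ 2 + (0 : ℝ) ^ 2)) :=
  stmt_11_general α γ hα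
end

section
/- Consider the general (not necessarily zero-sum) local game: player 1 minimizes over x the function xᵀa + xᵀB y + (1/(2η))xᵀx and player 2 minimizes over y the function yᵀc + yᵀC x + (1/(2η))yᵀy, where a ∈ ℝ^m, c ∈ ℝ^n, B ∈ ℝ^{m×n}, C ∈ ℝ^{n×m}, η > 0, and Id − η²BC is invertible. Then (x*, y*) = (−η(Id − η²BC)⁻¹(a − ηBc), −η(Id − η²CB)⁻¹(c − ηCa)) is a pure Nash equilibrium: x* minimizes player 1's cost given y*, and y* minimizes player 2's cost given x*. -/
/-!
Each cost is a strictly convex quadratic in the player's own variable whose unique minimizer,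
by completing the square, is `-η` times the linear part. So it suffices that the closed-form
pair solves `x = -η (a + B y)`, `y = -η (c + C x)`. Substituting one equation into the other
gives `(1 - η² B C) x = -η (a - η B c)` and symmetrically for `y`; the matrix `1 - η² C B` is
invertible together with `1 - η² B C` by the Weinstein–Aronszajn identity.
-/

open Matrix

section

variable {ι κ R : Type*} [Fintype ι] [Fintype κ] [CommRing R]

lemma isUnit_one_sub_smul_mul_comm [DecidableEq ι] [DecidableEq κ] (t : R)
    (B : Matrix ι κ R) (C : Matrix κ ι R) (h : IsUnit (1 - t • (B * C))) :
    IsUnit (1 - t • (C * B)) := by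
  rw [isUnit_iff_isUnit_det, ← Matrix.smul_mul, det_one_sub_mul_comm, Matrix.mul_smul]
  exact (isUnit_iff_isUnit_det _).mp h

lemma eq_neg_smul_inv_mulVec_iff [DecidableEq ι] {A : Matrix ι ι R} (hA : IsUnit A) (t : R)
    (x v : ι → R) : x = -t • (A⁻¹ *ᵥ v) ↔ A *ᵥ x = -t • v := by
  have := hA.invertible
  rw [← mulVec_smul]
  exact ⟨fun h => by rw [h, mulVec_mulVec, mul_inv_of_invertible, one_mulVec],
    fun h => (inv_mulVec_eq_vec h.symm).symm⟩

lemma eq_neg_smul_add_mulVec_iff [DecidableEq ι] (η : R) (a : ι → R) (c : κ → R)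
    (B : Matrix ι κ R) (C : Matrix κ ι R) (x : ι → R) :
    x = -η • (a + B *ᵥ (-η • (c + C *ᵥ x))) ↔
      (1 - η ^ 2 • (B * C)) *ᵥ x = -η • (a - η • B *ᵥ c) := by
  have key : (1 - η ^ 2 • (B * C)) *ᵥ x - -η • (a - η • B *ᵥ c) =
      x - -η • (a + B *ᵥ (-η • (c + C *ᵥ x))) := by
    simp only [sub_mulVec, one_mulVec, smul_mulVec, ← mulVec_mulVec, mulVec_add, mulVec_smul]
    module
  rw [← sub_eq_zero, ← key, sub_eq_zero]

end

lemma dotProduct_quadratic_le_of_eq_neg_smul {ι : Type*} [Fintype ι] {η : ℝ} (hη : 0 < η)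
    {a b x₀ : ι → ℝ} (hx₀ : x₀ = -η • (a + b)) (x : ι → ℝ) :
    x₀ ⬝ᵥ a + x₀ ⬝ᵥ b + 1 / (2 * η) * (x₀ ⬝ᵥ x₀) ≤
      x ⬝ᵥ a + x ⬝ᵥ b + 1 / (2 * η) * (x ⬝ᵥ x) := by
  subst hx₀
  set d := a + b
  have hsq : 0 ≤ (x - -η • d) ⬝ᵥ (x - -η • d) := by
    simpa using dotProduct_star_self_nonneg (x - -η • d)
  have gap : x ⬝ᵥ d + 1 / (2 * η) * (x ⬝ᵥ x) -
      ((-η • d) ⬝ᵥ d + 1 / (2 * η) * ((-η • d) ⬝ᵥ (-η • d))) =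
      1 / (2 * η) * ((x - -η • d) ⬝ᵥ (x - -η • d)) := by
    simp only [sub_dotProduct, dotProduct_sub, smul_dotProduct, dotProduct_smul, smul_eq_mul,
      dotProduct_comm d x]
    field_simp
    ring
  have hcoef : 0 ≤ 1 / (2 * η) := by positivity
  rw [← dotProduct_add, ← dotProduct_add]
  linarith [mul_nonneg hcoef hsq]

/-- general (not necessarily zero-sum) quadratic-regularized bilinear local
game: the closed-form CGD pair is a pure Nash equilibrium. -/
theorem stmt_14 (m n : ℕ) (a : Fin m → ℝ) (c : Fin n → ℝ)
    (B : Matrix (Fin m) (Fin n) ℝ) (C : Matrix (Fin n) (Fin m) ℝ) (η : ℝ) (hη : 0 < η)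
    (hinv : IsUnit ((1 : Matrix (Fin m) (Fin m) ℝ) - η ^ 2 • (B * C))) :
    let P1 : (Fin m → ℝ) → (Fin n → ℝ) → ℝ := fun x y =>
      x ⬝ᵥ a + x ⬝ᵥ B.mulVec y + (1 / (2 * η)) * (x ⬝ᵥ x)
    let P2 : (Fin n → ℝ) → (Fin m → ℝ) → ℝ := fun y x =>
      y ⬝ᵥ c + y ⬝ᵥ C.mulVec x + (1 / (2 * η)) * (y ⬝ᵥ y)
    let xstar : Fin m → ℝ :=
      -η • ((1 - η ^ 2 • (B * C))⁻¹.mulVec (a - η • B.mulVec c))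
    let ystar : Fin n → ℝ :=
      -η • ((1 - η ^ 2 • (C * B))⁻¹.mulVec (c - η • C.mulVec a))
    (∀ x, P1 xstar ystar ≤ P1 x ystar) ∧ (∀ y, P2 ystar xstar ≤ P2 y xstar) := by
  intro P1 P2 xstar ystar
  have hinv' := isUnit_one_sub_smul_mul_comm (η ^ 2) B C hinv
  have hx : xstar = -η • (a + B *ᵥ (-η • (c + C *ᵥ xstar))) :=
    (eq_neg_smul_add_mulVec_iff η a c B C xstar).mpr
      ((eq_neg_smul_inv_mulVec_iff hinv η _ _).mp rfl)
  have hy : ystar = -η • (c + C *ᵥ xstar) := by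
    refine ((eq_neg_smul_inv_mulVec_iff hinv' η _ _).mpr ?_).symm
    refine (eq_neg_smul_add_mulVec_iff η c a C B _).mp ?_
    rw [← hx]
  rw [← hy] at hx
  exact ⟨dotProduct_quadratic_le_of_eq_neg_smul hη hx,
    dotProduct_quadratic_le_of_eq_neg_smul hη hy⟩
end
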